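/- In the inhomogeneous Hamilton algebra IHa(N) (N ≥ 3), the elements J_ij' := J_ij T² + (G_i Q_j − G_j Q_i) T + (F_i P_j − F_j P_i) T + (P_i Q_j − P_j Q_i) R of U(IHa(N)) commute with every generator of the radical: [J_ij', Y] = 0 for Y ∈ {G_k, F_k, Q_k, P_k, R, E, T}. -/

import Mathlib

/-!
Bracketing with a fixed element `y` is a derivation of an associative algebra, so `⁅J'_ij, y⁆` is
computed term by term from the brackets of the generators with `y`. Since `T` is central and `R`
commutes with everything but `E`, `J'_ij` commutes with `T` and `R` outright. For `y = G_l, F_l,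
Q_l, P_l` the term `J_ij T²` produces `(-δ_il y_j + δ_jl y_i) T²`, which is cancelled by the term
`(G_i Q_j - G_j Q_i) T` (for `G`, `Q`) or `(F_i P_j - F_j P_i) T` (for `F`, `P`). For `G` and `F`
the remaining `T`-term and the `R`-term give the same combination of `P_a R T` (resp. `Q_a R T`)
with opposite signs. For `y = E` the three quadratic terms are multiples of `(P_i Q_j - P_j Q_i) T`
with coefficients `1`, `1` and `-2`.
-/

open UniversalEnvelopingAlgebra

/-- Kronecker delta with values in a field `k`. -/
def kdelta (k : Type*) [Field k] {N : ℕ} (a b : Fin N) : k := if a = b then 1 else 0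

theorem kdelta_comm (k : Type*) [Field k] {N : ℕ} (a b : Fin N) :
    kdelta k a b = kdelta k b a := by
  simp only [kdelta, eq_comm]

theorem Ring.mul_lie {A : Type*} [Ring A] (a b c : A) : ⁅a * b, c⁆ = a * ⁅b, c⁆ + ⁅a, c⁆ * b := by
  simp only [Ring.lie_def]
  noncomm_ring

theorem lie_eq_neg_of_lie_eq {L : Type*} [LieRing L] {x y z : L} (h : ⁅y, x⁆ = z) :
    ⁅x, y⁆ = -z := by
  rw [← lie_skew, h]

namespace IHa

attribute [local instance] LieRing.ofAssociativeRing

variable {k : Type*} [Field k] {g : Type*} [LieRing g] [LieAlgebra k g]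
  {A : Type*} [Ring A] [Algebra k A] (φ : g →ₗ⁅k⁆ A)

theorem _root_.LieHom.commute_of_lie_eq_zero {x y : g} (h : ⁅x, y⁆ = 0) :
    Commute (φ x) (φ y) := by
  rw [commute_iff_lie_eq, ← φ.map_lie, h, map_zero]

variable {N : ℕ} (J : Fin N → Fin N → g) (G F Q P : Fin N → g) (R T : g)

/-- `J'_ij` formed in the image of a Lie algebra map `φ` into an associative algebra;
for `φ = ι k` it is the element of `U(IHa(N))` in the theorem. -/
def virtualJ (i j : Fin N) : A :=
  φ (J i j) * φ T ^ 2 + (φ (G i) * φ (Q j) - φ (G j) * φ (Q i)) * φ T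
    + (φ (F i) * φ (P j) - φ (F j) * φ (P i)) * φ T
    + (φ (P i) * φ (Q j) - φ (P j) * φ (Q i)) * φ R

theorem commute_virtualJ {z : g} (hJ : ∀ i j, ⁅J i j, z⁆ = 0) (hG : ∀ i, ⁅G i, z⁆ = 0)
    (hF : ∀ i, ⁅F i, z⁆ = 0) (hQ : ∀ i, ⁅Q i, z⁆ = 0) (hP : ∀ i, ⁅P i, z⁆ = 0)
    (hR : ⁅R, z⁆ = 0) (hT : ⁅T, z⁆ = 0) (i j : Fin N) :
    Commute (virtualJ φ J G F Q P R T i j) (φ z) := by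
  unfold virtualJ
  apply_rules (maxDepth := 100)
    [Commute.add_left, Commute.sub_left, Commute.mul_left, Commute.pow_left,
      φ.commute_of_lie_eq_zero]

variable {J G F Q P R T}

theorem virtualJ_lie_G
    (hJG : ∀ i j l, ⁅J i j, G l⁆ = -(kdelta k i l • G j) + kdelta k j l • G i)
    (hGF : ∀ i j, ⁅G i, F j⁆ = kdelta k i j • R)
    (hGQ : ∀ i j, ⁅G i, Q j⁆ = kdelta k i j • T)
    (hGG : ∀ i j, ⁅G i, G j⁆ = 0) (hGP : ∀ i j, ⁅G i, P j⁆ = 0)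
    (hGR : ∀ i, ⁅G i, R⁆ = 0) (hGT : ∀ i, ⁅G i, T⁆ = 0)
    (hPR : ∀ i, ⁅P i, R⁆ = 0) (hRT : ⁅R, T⁆ = 0) (i j l : Fin N) :
    ⁅virtualJ φ J G F Q P R T i j, φ (G l)⁆ = 0 := by
  have hRP := fun a => (φ.commute_of_lie_eq_zero (hPR a)).symm
  have hTR := (φ.commute_of_lie_eq_zero hRT).symm
  simp only [virtualJ, pow_two, add_lie, sub_lie, Ring.mul_lie, ← φ.map_lie, hJG, hGG,
    lie_eq_neg_of_lie_eq (hGF _ _), lie_eq_neg_of_lie_eq (hGQ _ _),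
    lie_eq_neg_of_lie_eq (hGP _ _), lie_eq_neg_of_lie_eq (hGR _), lie_eq_neg_of_lie_eq (hGT _),
    map_add, map_neg, map_smul, map_zero, neg_zero, mul_zero, zero_mul, add_zero, zero_add,
    add_mul, sub_mul, neg_mul, mul_neg, smul_mul_assoc, mul_smul_comm, mul_assoc,
    kdelta_comm k l, hTR.eq, (hRP _).left_comm]
  module

theorem virtualJ_lie_F
    (hJF : ∀ i j l, ⁅J i j, F l⁆ = -(kdelta k i l • F j) + kdelta k j l • F i)
    (hGF : ∀ i j, ⁅G i, F j⁆ = kdelta k i j • R)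
    (hFP : ∀ i j, ⁅F i, P j⁆ = kdelta k i j • T)
    (hFF : ∀ i j, ⁅F i, F j⁆ = 0) (hFQ : ∀ i j, ⁅F i, Q j⁆ = 0)
    (hFR : ∀ i, ⁅F i, R⁆ = 0) (hFT : ∀ i, ⁅F i, T⁆ = 0)
    (hQR : ∀ i, ⁅Q i, R⁆ = 0) (hQT : ∀ i, ⁅Q i, T⁆ = 0) (hRT : ⁅R, T⁆ = 0) (i j l : Fin N) :
    ⁅virtualJ φ J G F Q P R T i j, φ (F l)⁆ = 0 := by
  have hRQ := fun a => (φ.commute_of_lie_eq_zero (hQR a)).symm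
  have hTQ := fun a => (φ.commute_of_lie_eq_zero (hQT a)).symm
  have hTR := (φ.commute_of_lie_eq_zero hRT).symm
  simp only [virtualJ, pow_two, add_lie, sub_lie, Ring.mul_lie, ← φ.map_lie, hJF, hGF, hFF,
    lie_eq_neg_of_lie_eq (hFP _ _), lie_eq_neg_of_lie_eq (hFQ _ _),
    lie_eq_neg_of_lie_eq (hFR _), lie_eq_neg_of_lie_eq (hFT _),
    map_add, map_neg, map_smul, map_zero, neg_zero, mul_zero, zero_mul, add_zero, zero_add,
    add_mul, sub_mul, neg_mul, mul_neg, smul_mul_assoc, mul_smul_comm, mul_assoc,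
    kdelta_comm k l, hTR.eq, (hRQ _).left_comm, (hTQ _).left_comm]
  module

theorem virtualJ_lie_Q
    (hJQ : ∀ i j l, ⁅J i j, Q l⁆ = -(kdelta k i l • Q j) + kdelta k j l • Q i)
    (hGQ : ∀ i j, ⁅G i, Q j⁆ = kdelta k i j • T)
    (hQQ : ∀ i j, ⁅Q i, Q j⁆ = 0) (hFQ : ∀ i j, ⁅F i, Q j⁆ = 0) (hQP : ∀ i j, ⁅Q i, P j⁆ = 0)
    (hQR : ∀ i, ⁅Q i, R⁆ = 0) (hQT : ∀ i, ⁅Q i, T⁆ = 0) (i j l : Fin N) :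
    ⁅virtualJ φ J G F Q P R T i j, φ (Q l)⁆ = 0 := by
  have hTQ := fun a => (φ.commute_of_lie_eq_zero (hQT a)).symm
  simp only [virtualJ, pow_two, add_lie, sub_lie, Ring.mul_lie, ← φ.map_lie, hJQ, hGQ, hQQ, hFQ,
    lie_eq_neg_of_lie_eq (hQP _ _), lie_eq_neg_of_lie_eq (hQR _), lie_eq_neg_of_lie_eq (hQT _),
    map_add, map_neg, map_smul, map_zero, neg_zero, mul_zero, zero_mul, add_zero, zero_add,
    add_mul, sub_mul, neg_mul, smul_mul_assoc, mul_assoc, (hTQ _).left_comm]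
  module

theorem virtualJ_lie_P
    (hJP : ∀ i j l, ⁅J i j, P l⁆ = -(kdelta k i l • P j) + kdelta k j l • P i)
    (hFP : ∀ i j, ⁅F i, P j⁆ = kdelta k i j • T)
    (hPP : ∀ i j, ⁅P i, P j⁆ = 0) (hGP : ∀ i j, ⁅G i, P j⁆ = 0) (hQP : ∀ i j, ⁅Q i, P j⁆ = 0)
    (hPR : ∀ i, ⁅P i, R⁆ = 0) (hPT : ∀ i, ⁅P i, T⁆ = 0) (i j l : Fin N) :
    ⁅virtualJ φ J G F Q P R T i j, φ (P l)⁆ = 0 := by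
  have hTP := fun a => (φ.commute_of_lie_eq_zero (hPT a)).symm
  simp only [virtualJ, pow_two, add_lie, sub_lie, Ring.mul_lie, ← φ.map_lie, hJP, hFP, hPP, hGP,
    hQP, lie_eq_neg_of_lie_eq (hPR _), lie_eq_neg_of_lie_eq (hPT _),
    map_add, map_neg, map_smul, map_zero, neg_zero, mul_zero, zero_mul, add_zero, zero_add,
    add_mul, sub_mul, neg_mul, smul_mul_assoc, mul_assoc, (hTP _).left_comm]
  module

theorem virtualJ_lie_E {E : g} (hJE : ∀ i j, ⁅J i j, E⁆ = 0)
    (hEG : ∀ i, ⁅E, G i⁆ = -P i) (hEF : ∀ i, ⁅E, F i⁆ = Q i) (hER : ⁅E, R⁆ = (2 : k) • T)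
    (hEQ : ∀ i, ⁅E, Q i⁆ = 0) (hEP : ∀ i, ⁅E, P i⁆ = 0) (hET : ⁅E, T⁆ = 0)
    (hQP : ∀ i j, ⁅Q i, P j⁆ = 0) (i j : Fin N) :
    ⁅virtualJ φ J G F Q P R T i j, φ E⁆ = 0 := by
  have hQP' := fun a b => φ.commute_of_lie_eq_zero (hQP a b)
  simp only [virtualJ, pow_two, add_lie, sub_lie, Ring.mul_lie, ← φ.map_lie, hJE,
    lie_eq_neg_of_lie_eq (hEG _), lie_eq_neg_of_lie_eq (hEF _), lie_eq_neg_of_lie_eq hER,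
    lie_eq_neg_of_lie_eq (hEQ _), lie_eq_neg_of_lie_eq (hEP _), lie_eq_neg_of_lie_eq hET,
    neg_neg, map_neg, map_smul, map_zero, neg_zero, mul_zero, zero_mul, add_zero, zero_add,
    sub_mul, neg_mul, mul_neg, mul_smul_comm, mul_assoc, (hQP' _ _).left_comm]
  module

end IHa

theorem IHa_virtual_copy_commutes_radical_general
    (k : Type*) [Field k] (g : Type*) [LieRing g] [LieAlgebra k g] (N : ℕ)
    (J : Fin N → Fin N → g) (G F Q P : Fin N → g) (R E T : g)
    (hJG : ∀ i j l, ⁅J i j, G l⁆ = -(kdelta k i l • G j) + kdelta k j l • G i)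
    (hJF : ∀ i j l, ⁅J i j, F l⁆ = -(kdelta k i l • F j) + kdelta k j l • F i)
    (hJQ : ∀ i j l, ⁅J i j, Q l⁆ = -(kdelta k i l • Q j) + kdelta k j l • Q i)
    (hJP : ∀ i j l, ⁅J i j, P l⁆ = -(kdelta k i l • P j) + kdelta k j l • P i)
    (hGF : ∀ i j, ⁅G i, F j⁆ = kdelta k i j • R)
    (hGQ : ∀ i j, ⁅G i, Q j⁆ = kdelta k i j • T)
    (hFP : ∀ i j, ⁅F i, P j⁆ = kdelta k i j • T)
    (hEG : ∀ i, ⁅E, G i⁆ = -P i) (hEF : ∀ i, ⁅E, F i⁆ = Q i)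
    (hER : ⁅E, R⁆ = (2 : k) • T)
    (hGG : ∀ i j, ⁅G i, G j⁆ = 0) (hFF : ∀ i j, ⁅F i, F j⁆ = 0)
    (hQQ : ∀ i j, ⁅Q i, Q j⁆ = 0) (hPP : ∀ i j, ⁅P i, P j⁆ = 0)
    (hGP : ∀ i j, ⁅G i, P j⁆ = 0) (hFQ : ∀ i j, ⁅F i, Q j⁆ = 0)
    (hQP : ∀ i j, ⁅Q i, P j⁆ = 0)
    (hJR : ∀ i j, ⁅J i j, R⁆ = 0) (hJE : ∀ i j, ⁅J i j, E⁆ = 0)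
    (hJT : ∀ i j, ⁅J i j, T⁆ = 0)
    (hGR : ∀ i, ⁅G i, R⁆ = 0) (hFR : ∀ i, ⁅F i, R⁆ = 0)
    (hQR : ∀ i, ⁅Q i, R⁆ = 0) (hPR : ∀ i, ⁅P i, R⁆ = 0)
    (hGT : ∀ i, ⁅G i, T⁆ = 0) (hFT : ∀ i, ⁅F i, T⁆ = 0)
    (hQT : ∀ i, ⁅Q i, T⁆ = 0) (hPT : ∀ i, ⁅P i, T⁆ = 0)
    (hRT : ⁅R, T⁆ = 0) (hET : ⁅E, T⁆ = 0)
    (hEQ : ∀ i, ⁅E, Q i⁆ = 0) (hEP : ∀ i, ⁅E, P i⁆ = 0)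
 :
    ∀ i j l,
      ⁅(fun a b => (ι k (J a b) : UniversalEnvelopingAlgebra k g) * ι k T ^ 2
      + (ι k (G a) * ι k (Q b) - ι k (G b) * ι k (Q a)) * ι k T
      + (ι k (F a) * ι k (P b) - ι k (F b) * ι k (P a)) * ι k T
      + (ι k (P a) * ι k (Q b) - ι k (P b) * ι k (Q a)) * ι k R) i j, ι k (G l)⁆ = 0
      ∧ ⁅(fun a b => (ι k (J a b) : UniversalEnvelopingAlgebra k g) * ι k T ^ 2
      + (ι k (G a) * ι k (Q b) - ι k (G b) * ι k (Q a)) * ι k T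
      + (ι k (F a) * ι k (P b) - ι k (F b) * ι k (P a)) * ι k T
      + (ι k (P a) * ι k (Q b) - ι k (P b) * ι k (Q a)) * ι k R) i j, ι k (F l)⁆ = 0
      ∧ ⁅(fun a b => (ι k (J a b) : UniversalEnvelopingAlgebra k g) * ι k T ^ 2
      + (ι k (G a) * ι k (Q b) - ι k (G b) * ι k (Q a)) * ι k T
      + (ι k (F a) * ι k (P b) - ι k (F b) * ι k (P a)) * ι k T
      + (ι k (P a) * ι k (Q b) - ι k (P b) * ι k (Q a)) * ι k R) i j, ι k (Q l)⁆ = 0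
      ∧ ⁅(fun a b => (ι k (J a b) : UniversalEnvelopingAlgebra k g) * ι k T ^ 2
      + (ι k (G a) * ι k (Q b) - ι k (G b) * ι k (Q a)) * ι k T
      + (ι k (F a) * ι k (P b) - ι k (F b) * ι k (P a)) * ι k T
      + (ι k (P a) * ι k (Q b) - ι k (P b) * ι k (Q a)) * ι k R) i j, ι k (P l)⁆ = 0
      ∧ ⁅(fun a b => (ι k (J a b) : UniversalEnvelopingAlgebra k g) * ι k T ^ 2
      + (ι k (G a) * ι k (Q b) - ι k (G b) * ι k (Q a)) * ι k T
      + (ι k (F a) * ι k (P b) - ι k (F b) * ι k (P a)) * ι k T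
      + (ι k (P a) * ι k (Q b) - ι k (P b) * ι k (Q a)) * ι k R) i j, ι k R⁆ = 0
      ∧ ⁅(fun a b => (ι k (J a b) : UniversalEnvelopingAlgebra k g) * ι k T ^ 2
      + (ι k (G a) * ι k (Q b) - ι k (G b) * ι k (Q a)) * ι k T
      + (ι k (F a) * ι k (P b) - ι k (F b) * ι k (P a)) * ι k T
      + (ι k (P a) * ι k (Q b) - ι k (P b) * ι k (Q a)) * ι k R) i j, ι k E⁆ = 0
      ∧ ⁅(fun a b => (ι k (J a b) : UniversalEnvelopingAlgebra k g) * ι k T ^ 2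
      + (ι k (G a) * ι k (Q b) - ι k (G b) * ι k (Q a)) * ι k T
      + (ι k (F a) * ι k (P b) - ι k (F b) * ι k (P a)) * ι k T
      + (ι k (P a) * ι k (Q b) - ι k (P b) * ι k (Q a)) * ι k R) i j, ι k T⁆ = 0 := by
  intro i j l
  have hTR : ⁅T, R⁆ = 0 := by rw [lie_eq_neg_of_lie_eq hRT, neg_zero]
  exact ⟨IHa.virtualJ_lie_G (ι k) hJG hGF hGQ hGG hGP hGR hGT hPR hRT i j l,
    IHa.virtualJ_lie_F (ι k) hJF hGF hFP hFF hFQ hFR hFT hQR hQT hRT i j l,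
    IHa.virtualJ_lie_Q (ι k) hJQ hGQ hQQ hFQ hQP hQR hQT i j l,
    IHa.virtualJ_lie_P (ι k) hJP hFP hPP hGP hQP hPR hPT i j l,
    (IHa.commute_virtualJ (ι k) J G F Q P R T hJR hGR hFR hQR hPR (lie_self R) hTR i j).lie_eq,
    IHa.virtualJ_lie_E (ι k) hJE hEG hEF hER hEQ hEP hET hQP i j,
    (IHa.commute_virtualJ (ι k) J G F Q P R T hJT hGT hFT hQT hPT hRT (lie_self T) i j).lie_eq⟩

/-- In `IHa(N)` (`N ≥ 3`), the elements
`J'_ij = J_ij T² + (G_i Q_j − G_j Q_i)T + (F_i P_j − F_j P_i)T + (P_i Q_j − P_j Q_i)R`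
of `U(IHa(N))` commute with every generator of the radical. -/
theorem IHa_virtual_copy_commutes_radical
    (k : Type*) [Field k] (g : Type*) [LieRing g] [LieAlgebra k g] (N : ℕ) (hN : 3 ≤ N)
    (J : Fin N → Fin N → g) (G F Q P : Fin N → g) (R E T : g)
    (hJa : ∀ i j, J i j = -J j i)
    (hJJ : ∀ i j l m, ⁅J i j, J l m⁆ =
      kdelta k i m • J j l + kdelta k j l • J i m - kdelta k j m • J i l - kdelta k i l • J j m)
    (hJG : ∀ i j l, ⁅J i j, G l⁆ = -(kdelta k i l • G j) + kdelta k j l • G i)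
    (hJF : ∀ i j l, ⁅J i j, F l⁆ = -(kdelta k i l • F j) + kdelta k j l • F i)
    (hJQ : ∀ i j l, ⁅J i j, Q l⁆ = -(kdelta k i l • Q j) + kdelta k j l • Q i)
    (hJP : ∀ i j l, ⁅J i j, P l⁆ = -(kdelta k i l • P j) + kdelta k j l • P i)
    (hGF : ∀ i j, ⁅G i, F j⁆ = kdelta k i j • R)
    (hGQ : ∀ i j, ⁅G i, Q j⁆ = kdelta k i j • T)
    (hFP : ∀ i j, ⁅F i, P j⁆ = kdelta k i j • T)
    (hEG : ∀ i, ⁅E, G i⁆ = -P i) (hEF : ∀ i, ⁅E, F i⁆ = Q i)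
    (hER : ⁅E, R⁆ = (2 : k) • T)
    (hGG : ∀ i j, ⁅G i, G j⁆ = 0) (hFF : ∀ i j, ⁅F i, F j⁆ = 0)
    (hQQ : ∀ i j, ⁅Q i, Q j⁆ = 0) (hPP : ∀ i j, ⁅P i, P j⁆ = 0)
    (hGP : ∀ i j, ⁅G i, P j⁆ = 0) (hFQ : ∀ i j, ⁅F i, Q j⁆ = 0)
    (hQP : ∀ i j, ⁅Q i, P j⁆ = 0)
    (hJR : ∀ i j, ⁅J i j, R⁆ = 0) (hJE : ∀ i j, ⁅J i j, E⁆ = 0)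
    (hJT : ∀ i j, ⁅J i j, T⁆ = 0)
    (hGR : ∀ i, ⁅G i, R⁆ = 0) (hFR : ∀ i, ⁅F i, R⁆ = 0)
    (hQR : ∀ i, ⁅Q i, R⁆ = 0) (hPR : ∀ i, ⁅P i, R⁆ = 0)
    (hGT : ∀ i, ⁅G i, T⁆ = 0) (hFT : ∀ i, ⁅F i, T⁆ = 0)
    (hQT : ∀ i, ⁅Q i, T⁆ = 0) (hPT : ∀ i, ⁅P i, T⁆ = 0)
    (hRT : ⁅R, T⁆ = 0) (hET : ⁅E, T⁆ = 0)
    (hEQ : ∀ i, ⁅E, Q i⁆ = 0) (hEP : ∀ i, ⁅E, P i⁆ = 0)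
 :
    ∀ i j l,
      ⁅(fun a b => (ι k (J a b) : UniversalEnvelopingAlgebra k g) * ι k T ^ 2
      + (ι k (G a) * ι k (Q b) - ι k (G b) * ι k (Q a)) * ι k T
      + (ι k (F a) * ι k (P b) - ι k (F b) * ι k (P a)) * ι k T
      + (ι k (P a) * ι k (Q b) - ι k (P b) * ι k (Q a)) * ι k R) i j, ι k (G l)⁆ = 0
      ∧ ⁅(fun a b => (ι k (J a b) : UniversalEnvelopingAlgebra k g) * ι k T ^ 2
      + (ι k (G a) * ι k (Q b) - ι k (G b) * ι k (Q a)) * ι k T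
      + (ι k (F a) * ι k (P b) - ι k (F b) * ι k (P a)) * ι k T
      + (ι k (P a) * ι k (Q b) - ι k (P b) * ι k (Q a)) * ι k R) i j, ι k (F l)⁆ = 0
      ∧ ⁅(fun a b => (ι k (J a b) : UniversalEnvelopingAlgebra k g) * ι k T ^ 2
      + (ι k (G a) * ι k (Q b) - ι k (G b) * ι k (Q a)) * ι k T
      + (ι k (F a) * ι k (P b) - ι k (F b) * ι k (P a)) * ι k T
      + (ι k (P a) * ι k (Q b) - ι k (P b) * ι k (Q a)) * ι k R) i j, ι k (Q l)⁆ = 0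
      ∧ ⁅(fun a b => (ι k (J a b) : UniversalEnvelopingAlgebra k g) * ι k T ^ 2
      + (ι k (G a) * ι k (Q b) - ι k (G b) * ι k (Q a)) * ι k T
      + (ι k (F a) * ι k (P b) - ι k (F b) * ι k (P a)) * ι k T
      + (ι k (P a) * ι k (Q b) - ι k (P b) * ι k (Q a)) * ι k R) i j, ι k (P l)⁆ = 0
      ∧ ⁅(fun a b => (ι k (J a b) : UniversalEnvelopingAlgebra k g) * ι k T ^ 2
      + (ι k (G a) * ι k (Q b) - ι k (G b) * ι k (Q a)) * ι k T
      + (ι k (F a) * ι k (P b) - ι k (F b) * ι k (P a)) * ι k T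
      + (ι k (P a) * ι k (Q b) - ι k (P b) * ι k (Q a)) * ι k R) i j, ι k R⁆ = 0
      ∧ ⁅(fun a b => (ι k (J a b) : UniversalEnvelopingAlgebra k g) * ι k T ^ 2
      + (ι k (G a) * ι k (Q b) - ι k (G b) * ι k (Q a)) * ι k T
      + (ι k (F a) * ι k (P b) - ι k (F b) * ι k (P a)) * ι k T
      + (ι k (P a) * ι k (Q b) - ι k (P b) * ι k (Q a)) * ι k R) i j, ι k E⁆ = 0
      ∧ ⁅(fun a b => (ι k (J a b) : UniversalEnvelopingAlgebra k g) * ι k T ^ 2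
      + (ι k (G a) * ι k (Q b) - ι k (G b) * ι k (Q a)) * ι k T
      + (ι k (F a) * ι k (P b) - ι k (F b) * ι k (P a)) * ι k T
      + (ι k (P a) * ι k (Q b) - ι k (P b) * ι k (Q a)) * ι k R) i j, ι k T⁆ = 0 :=
  IHa_virtual_copy_commutes_radical_general k g N J G F Q P R E T hJG hJF hJQ hJP hGF hGQ hFP hEG
    hEF hER hGG hFF hQQ hPP hGP hFQ hQP hJR hJE hJT hGR hFR hQR hPR hGT hFT hQT hPT hRT hET hEQ hEP
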